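/- arXiv:0908.2013 — 7 statements merged into one kernel-verified Lean document; each statement's English description precedes it below -/
import Mathlib

section
/- Let f be a Legendre function on ℝ^J, D its Bregman distance, and C a nonempty subset of U = int dom f. Define the farthest-point map Q_C(x) = argmax_{c ∈ C} D(x,c) for x ∈ dom f. Then the set-valued operator x ↦ -∇f(Q_C(x)) is monotone: for (x, x*) and (y, y*) in the graph of Q_C, ⟨x - y, ∇f(y*) - ∇f(x*)⟩ ≥ 0. -/
open Set Filter Topology Bornology

noncomputable section

/-- Data for a Bregman setup on `ℝ^J`: an extended-real-valued function `f`
together with a choice of gradient map (meaningful on the interior of the domain). -/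
structure BregmanSetup (J : ℕ) where
  f : EuclideanSpace ℝ (Fin J) → EReal
  grad : EuclideanSpace ℝ (Fin J) → EuclideanSpace ℝ (Fin J)

namespace BregmanSetup

open scoped Classical

variable {J : ℕ} (B : BregmanSetup J)

/-- The (essential) domain of `f`. -/
def dom : Set (EuclideanSpace ℝ (Fin J)) := {x | B.f x ≠ ⊤}

/-- `U`, the interior of the domain of `f`. -/
def U : Set (EuclideanSpace ℝ (Fin J)) := interior B.dom

/-- `f` is a convex function of Legendre type: proper, lsc, convex,
essentially smooth (differentiable on `U` with gradient `B.grad`, steep at the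
boundary) and essentially strictly convex (strictly convex on `U`). -/
structure IsLegendre : Prop where
  proper_bot : ∀ x, B.f x ≠ ⊥
  nonempty_int : B.U.Nonempty
  convex_dom : Convex ℝ B.dom
  convexOn : ConvexOn ℝ B.dom (fun x => (B.f x).toReal)
  lsc : LowerSemicontinuous B.f
  smooth : ∀ y ∈ B.U, HasGradientAt (fun x => (B.f x).toReal) (B.grad y) y
  strict : StrictConvexOn ℝ B.U (fun x => (B.f x).toReal)
  steep : ∀ x ∈ frontier B.dom, ∀ s : ℕ → EuclideanSpace ℝ (Fin J),
    (∀ n, s n ∈ B.U) → Tendsto s atTop (nhds x) →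
    Tendsto (fun n => ‖B.grad (s n)‖) atTop atTop

/-- The Bregman distance `D(x,y) = f(x) - f(y) - ⟨∇f(y), x - y⟩` for `y ∈ U`,
and `+∞` otherwise. -/
def D (x y : EuclideanSpace ℝ (Fin J)) : EReal :=
  if y ∈ B.U then B.f x - B.f y - ((inner ℝ (B.grad y) (x - y) : ℝ) : EReal) else ⊤

/-- The right Bregman farthest-distance function of a set `C`. -/
def F (C : Set (EuclideanSpace ℝ (Fin J))) (x : EuclideanSpace ℝ (Fin J)) : EReal :=
  ⨆ c ∈ C, B.D x c

/-- The right Bregman farthest-point map of a set `C` (empty outside `dom f`). -/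
def Q (C : Set (EuclideanSpace ℝ (Fin J))) (x : EuclideanSpace ℝ (Fin J)) :
    Set (EuclideanSpace ℝ (Fin J)) :=
  {c | c ∈ C ∧ x ∈ B.dom ∧ ∀ c' ∈ C, B.D x c' ≤ B.D x c}

end BregmanSetup

/-!
Compare the two farthest-point inequalities `D(x, y*) ≤ D(x, x*)` and `D(y, x*) ≤ D(y, y*)`.
In their sum the values of `f` at `x`, `y`, `x*`, `y*` cancel, as do the terms `⟨∇f(c), c⟩`,
and what is left is exactly `⟨x - y, ∇f(y*) - ∇f(x*)⟩ ≥ 0`.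
-/

namespace BregmanSetup

variable {J : ℕ} (B : BregmanSetup J)

theorem D_eq_coe (hproper : ∀ z, B.f z ≠ ⊥) {x c : EuclideanSpace ℝ (Fin J)}
    (hx : x ∈ B.dom) (hc : c ∈ B.U) :
    B.D x c = (((B.f x).toReal - (B.f c).toReal - inner ℝ (B.grad c) (x - c) : ℝ) : EReal) := by
  rw [D, if_pos hc, ← EReal.coe_toReal hx (hproper x),
    ← EReal.coe_toReal (interior_subset hc : c ∈ B.dom) (hproper c)]
  rfl

theorem inner_sub_grad_sub_nonneg_of_D_le (hproper : ∀ z, B.f z ≠ ⊥)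
    {x y c c' : EuclideanSpace ℝ (Fin J)} (hx : x ∈ B.dom) (hy : y ∈ B.dom)
    (hc : c ∈ B.U) (hc' : c' ∈ B.U) (hxc : B.D x c' ≤ B.D x c) (hyc : B.D y c ≤ B.D y c') :
    0 ≤ inner ℝ (x - y) (B.grad c' - B.grad c) := by
  rw [B.D_eq_coe hproper hx hc, B.D_eq_coe hproper hx hc', EReal.coe_le_coe_iff] at hxc
  rw [B.D_eq_coe hproper hy hc, B.D_eq_coe hproper hy hc', EReal.coe_le_coe_iff] at hyc
  simp only [inner_sub_left, inner_sub_right] at hxc hyc ⊢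
  simp only [real_inner_comm x, real_inner_comm y] at hxc hyc
  linarith

end BregmanSetup

theorem neg_grad_comp_farthest_monotone_general {J : ℕ} (B : BregmanSetup J) (hB : B.IsLegendre)
    (C : Set (EuclideanSpace ℝ (Fin J))) (hCU : C ⊆ B.U)
    (x y xstar ystar : EuclideanSpace ℝ (Fin J)) (hx : xstar ∈ B.Q C x) (hy : ystar ∈ B.Q C y) :
    0 ≤ (inner ℝ (x - y) (B.grad ystar - B.grad xstar) : ℝ) := by
  obtain ⟨hxC, hxdom, hxmax⟩ := hx
  obtain ⟨hyC, hydom, hymax⟩ := hy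
  exact B.inner_sub_grad_sub_nonneg_of_D_le hB.proper_bot hxdom hydom (hCU hxC) (hCU hyC)
    (hxmax ystar hyC) (hymax xstar hxC)

/-- (Proposition 7.1 analogue) The operator `-∇f ∘ Q_C` is monotone: for `(x, x*)`
and `(y, y*)` in the graph of the farthest-point map `Q_C`,
`⟨x - y, ∇f(y*) - ∇f(x*)⟩ ≥ 0`. -/
theorem neg_grad_comp_farthest_monotone {J : ℕ} (B : BregmanSetup J) (hB : B.IsLegendre)
    (C : Set (EuclideanSpace ℝ (Fin J))) (hCne : C.Nonempty) (hCU : C ⊆ B.U)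
    (x y xstar ystar : EuclideanSpace ℝ (Fin J)) (hx : xstar ∈ B.Q C x) (hy : ystar ∈ B.Q C y) :
    0 ≤ (inner ℝ (x - y) (B.grad ystar - B.grad xstar) : ℝ) :=
  neg_grad_comp_farthest_monotone_general B hB C hCU x y xstar ystar hx hy
end
end

section
/- Let f be Legendre on ℝ^J, C a nonempty closed subset of U = int dom f, and ((xₙ, yₙ)) a sequence in the graph of the right Bregman farthest-point map Q_C with xₙ ∈ U, converging to (x, y) ∈ U × ℝ^J. Then y ∈ Q_C(x), i.e., the graph of Q_C restricted to U is closed. -/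
open Set Filter Topology Bornology

noncomputable section

/-!
On `U` the Bregman distance is the real number `f x - f y - ⟪∇f y, x - y⟫`, so the inequalities
`D(xₙ, c) ≤ D(xₙ, yₙ)` pass to the limit once `f` and `∇f` are continuous on `U`. For `f` this is
differentiability. For `∇f` it is a general fact about differentiable convex functions on an open
subset of a finite-dimensional space: their gradients are locally bounded (convex functions are
locally Lipschitz there), and any limit of `∇f cₙ` with `cₙ → y` is a subgradient at `y`, hence
equals `∇f y`.
-/

section ConvexGradient

open InnerProductSpace

variable {E : Type*} [NormedAddCommGroup E] [InnerProductSpace ℝ E] [CompleteSpace E]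
  {φ : E → ℝ} {s : Set E} {g : E → E} {v w y : E}

theorem ConvexOn.add_inner_le_of_hasGradientAt (hφ : ConvexOn ℝ s φ) {c z : E}
    (hc : c ∈ s) (hz : z ∈ s) (hv : HasGradientAt φ v c) :
    φ c + ⟪v, z - c⟫_ℝ ≤ φ z := by
  let L : ℝ →ᵃ[ℝ] E := AffineMap.lineMap c z
  have hderiv : HasDerivAt (φ ∘ L) ⟪v, z - c⟫_ℝ 0 := by
    simpa using hv.hasFDerivAt.comp_hasDerivAt_of_eq (0 : ℝ) AffineMap.hasDerivAt_lineMap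
      (by simp)
  have := (hφ.comp_affineMap L).le_slope_of_hasDerivAt (by simpa [L] using hc)
    (by simpa [L] using hz) zero_lt_one hderiv
  simp only [slope_def_field, Function.comp_apply, L, AffineMap.lineMap_apply_zero,
    AffineMap.lineMap_apply_one, sub_zero, div_one] at this
  linarith

theorem HasGradientAt.eq_of_eventually_add_inner_le (hv : HasGradientAt φ v y)
    (hw : ∀ᶠ z in 𝓝 y, φ y + ⟪w, z - y⟫_ℝ ≤ φ z) : w = v := by
  have hmin : IsLocalMin (fun z => φ z - ⟪w, z - y⟫_ℝ) y := by
    filter_upwards [hw] with z hz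
    simp only [sub_self, inner_zero_right, sub_zero]
    linarith
  have hderiv : HasFDerivAt (fun z => φ z - ⟪w, z - y⟫_ℝ) (toDual ℝ E (v - w)) y := by
    rw [map_sub]
    exact hv.hasFDerivAt.sub ((toDual ℝ E w).hasFDerivAt.comp y ((hasFDerivAt_id y).sub_const y))
  have := hmin.hasFDerivAt_eq_zero hderiv
  rw [LinearIsometryEquiv.map_eq_zero_iff, sub_eq_zero] at this
  exact this.symm

theorem ConvexOn.add_inner_le_of_tendsto (hφ : ConvexOn ℝ s φ) (hs : IsOpen s)
    (hg : ∀ c ∈ s, HasGradientAt φ (g c) c) (hy : y ∈ s) {ι : Type*} {l : Filter ι} [l.NeBot]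
    {u : ι → E} (hu : Tendsto u l (𝓝 y)) (hw : Tendsto (g ∘ u) l (𝓝 w)) {z : E} (hz : z ∈ s) :
    φ y + ⟪w, z - y⟫_ℝ ≤ φ z := by
  have hlim : Tendsto (fun i => φ (u i) + ⟪g (u i), z - u i⟫_ℝ) l (𝓝 (φ y + ⟪w, z - y⟫_ℝ)) :=
    ((hg y hy).differentiableAt.continuousAt.tendsto.comp hu).add
      (hw.inner (tendsto_const_nhds.sub hu))
  refine le_of_tendsto hlim ?_
  filter_upwards [hu.eventually_mem (hs.mem_nhds hy)] with i hi
  exact hφ.add_inner_le_of_hasGradientAt hi hz (hg _ hi)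

end ConvexGradient

section FiniteDimensionalConvexGradient

open InnerProductSpace

variable {E : Type*} [NormedAddCommGroup E] [InnerProductSpace ℝ E] [FiniteDimensional ℝ E]
  {φ : E → ℝ} {s : Set E} {g : E → E} {y : E}

theorem ConvexOn.exists_eventually_norm_le_of_hasGradientAt (hφ : ConvexOn ℝ s φ)
    (hs : IsOpen s) (hg : ∀ c ∈ s, HasGradientAt φ (g c) c) (hy : y ∈ s) :
    ∃ K : ℝ, ∀ᶠ c in 𝓝 y, ‖g c‖ ≤ K := by
  obtain ⟨K, t, ht, hlip⟩ := hφ.locallyLipschitzOn hs hy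
  rw [hs.nhdsWithin_eq hy] at ht
  refine ⟨K, ?_⟩
  filter_upwards [eventually_eventually_nhds.2 ht, hs.mem_nhds hy] with c hct hcs
  simpa using (hg c hcs).hasFDerivAt.le_of_lipschitzOn hct hlip

theorem ConvexOn.continuousOn_of_hasGradientAt (hφ : ConvexOn ℝ s φ) (hs : IsOpen s)
    (hg : ∀ c ∈ s, HasGradientAt φ (g c) c) : ContinuousOn g s := by
  refine hs.continuousOn_iff.2 fun y hy => ?_
  rw [ContinuousAt, tendsto_nhds_iff_seq_tendsto]
  intro u hu
  obtain ⟨K, hK⟩ := hφ.exists_eventually_norm_le_of_hasGradientAt hs hg hy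
  refine tendsto_of_subseq_tendsto fun ns hns => ?_
  have huns : Tendsto (u ∘ ns) atTop (𝓝 y) := hu.comp hns
  have hbdd : ∃ᶠ n in atTop, (g ∘ u ∘ ns) n ∈ Metric.closedBall 0 K :=
    (huns.eventually hK).frequently.mono fun n hn => by simpa using hn
  obtain ⟨w, -, ψ, hψ, hw⟩ := (isCompact_closedBall 0 K).tendsto_subseq' hbdd
  refine ⟨ψ, ?_⟩
  have hsub : ∀ z ∈ s, φ y + ⟪w, z - y⟫_ℝ ≤ φ z := fun z hz =>
    hφ.add_inner_le_of_tendsto hs hg hy (huns.comp hψ.tendsto_atTop) hw hz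
  have := (hg y hy).eq_of_eventually_add_inner_le
    (mem_of_superset (hs.mem_nhds hy) hsub)
  rwa [← this]

end FiniteDimensionalConvexGradient

namespace BregmanSetup

variable {J : ℕ} (B : BregmanSetup J)

def Dreal (x y : EuclideanSpace ℝ (Fin J)) : ℝ :=
  (B.f x).toReal - (B.f y).toReal - inner ℝ (B.grad y) (x - y)

variable {B}

theorem IsLegendre.convexOn_U (hB : B.IsLegendre) :
    ConvexOn ℝ B.U (fun x => (B.f x).toReal) :=
  hB.convexOn.subset interior_subset hB.convex_dom.interior

theorem IsLegendre.continuousOn_grad (hB : B.IsLegendre) : ContinuousOn B.grad B.U :=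
  hB.convexOn_U.continuousOn_of_hasGradientAt isOpen_interior hB.smooth

theorem IsLegendre.continuousOn_Dreal (hB : B.IsLegendre) :
    ContinuousOn (fun p => B.Dreal p.1 p.2) (B.U ×ˢ B.U) := by
  have hf : ContinuousOn (fun x => (B.f x).toReal) B.U := fun x hx =>
    (hB.smooth x hx).differentiableAt.continuousAt.continuousWithinAt
  have hfst : MapsTo Prod.fst (B.U ×ˢ B.U) B.U := fun _ hp => hp.1
  have hsnd : MapsTo Prod.snd (B.U ×ˢ B.U) B.U := fun _ hp => hp.2
  exact ((hf.comp continuousOn_fst hfst).sub (hf.comp continuousOn_snd hsnd)).sub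
    ((hB.continuousOn_grad.comp continuousOn_snd hsnd).inner
      (continuousOn_fst.sub continuousOn_snd))

theorem IsLegendre.D_eq_coe_Dreal (hB : B.IsLegendre) {x y : EuclideanSpace ℝ (Fin J)}
    (hx : x ∈ B.dom) (hy : y ∈ B.U) : B.D x y = B.Dreal x y := by
  rw [D, if_pos hy, Dreal, EReal.coe_sub, EReal.coe_sub,
    EReal.coe_toReal hx (hB.proper_bot x), EReal.coe_toReal (interior_subset hy) (hB.proper_bot y)]

theorem IsLegendre.D_le_D_iff (hB : B.IsLegendre) {x c c' : EuclideanSpace ℝ (Fin J)}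
    (hx : x ∈ B.dom) (hc : c ∈ B.U) (hc' : c' ∈ B.U) :
    B.D x c ≤ B.D x c' ↔ B.Dreal x c ≤ B.Dreal x c' := by
  rw [hB.D_eq_coe_Dreal hx hc, hB.D_eq_coe_Dreal hx hc', EReal.coe_le_coe_iff]

end BregmanSetup

theorem farthest_map_graph_closed_general {J : ℕ} (B : BregmanSetup J) (hB : B.IsLegendre)
    (C : Set (EuclideanSpace ℝ (Fin J))) (hCU : C ⊆ B.U) (hCcl : IsClosed C)
    (xs ys : ℕ → EuclideanSpace ℝ (Fin J)) (hxsU : ∀ n, xs n ∈ B.U) (hgraph : ∀ n, ys n ∈ B.Q C (xs n))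
    (x y : EuclideanSpace ℝ (Fin J)) (hxU : x ∈ B.U)
    (hxlim : Tendsto xs atTop (nhds x)) (hylim : Tendsto ys atTop (nhds y)) :
    y ∈ B.Q C x := by
  have hyC : y ∈ C := hCcl.mem_of_tendsto hylim (.of_forall fun n => (hgraph n).1)
  have hDlim {zs : ℕ → EuclideanSpace ℝ (Fin J)} {z : EuclideanSpace ℝ (Fin J)}
      (hzs : ∀ n, zs n ∈ C) (hz : z ∈ C) (hzlim : Tendsto zs atTop (𝓝 z)) :
      Tendsto (fun n => B.Dreal (xs n) (zs n)) atTop (𝓝 (B.Dreal x z)) :=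
    (hB.continuousOn_Dreal (x, z) ⟨hxU, hCU hz⟩).tendsto.comp <| tendsto_nhdsWithin_iff.2
      ⟨hxlim.prodMk_nhds hzlim, .of_forall fun n => ⟨hxsU n, hCU (hzs n)⟩⟩
  refine ⟨hyC, interior_subset hxU, fun c hc => ?_⟩
  rw [hB.D_le_D_iff (interior_subset hxU) (hCU hc) (hCU hyC)]
  refine le_of_tendsto_of_tendsto' (hDlim (fun _ => hc) hc tendsto_const_nhds)
    (hDlim (fun n => (hgraph n).1) hyC hylim) fun n => ?_
  exact (hB.D_le_D_iff (interior_subset (hxsU n)) (hCU hc) (hCU (hgraph n).1)).1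
    ((hgraph n).2.2 c hc)

/-- The graph of the farthest-point map `Q_C` is closed over `U`: if `C` is a nonempty
closed subset of `U` and `(xₙ, yₙ)` is a sequence in the graph of `Q_C` with `xₙ ∈ U`,
converging to `(x, y) ∈ U × ℝ^J`, then `y ∈ Q_C(x)`. -/
theorem farthest_map_graph_closed {J : ℕ} (B : BregmanSetup J) (hB : B.IsLegendre)
    (C : Set (EuclideanSpace ℝ (Fin J))) (hCne : C.Nonempty) (hCU : C ⊆ B.U) (hCcl : IsClosed C)
    (xs ys : ℕ → EuclideanSpace ℝ (Fin J)) (hxsU : ∀ n, xs n ∈ B.U) (hgraph : ∀ n, ys n ∈ B.Q C (xs n))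
    (x y : EuclideanSpace ℝ (Fin J)) (hxU : x ∈ B.U)
    (hxlim : Tendsto xs atTop (nhds x)) (hylim : Tendsto ys atTop (nhds y)) :
    y ∈ B.Q C x :=
  farthest_map_graph_closed_general B hB C hCU hCcl xs ys hxsU hgraph x y hxU hxlim hylim
end
end

section
/- Let f be Legendre on ℝ^J with Bregman distance D, and suppose D(x,·) is convex on U for every x ∈ dom f. Let C be a nonempty subset of U = int dom f. Then every pair (x,y) in the graph of the farthest-point map Q_C also lies in the graph of Q_{conv C}: if y ∈ C maximizes c ↦ D(x,c) over C, then y maximizes it over conv C. -/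
open Set Filter Topology Bornology

noncomputable section

namespace BregmanSetup

variable {J : ℕ} {B : BregmanSetup J}

theorem coe_toReal_D (hbot : ∀ z, B.f z ≠ ⊥) {x c : EuclideanSpace ℝ (Fin J)}
    (hx : x ∈ B.dom) (hc : c ∈ B.U) : ((B.D x c).toReal : EReal) = B.D x c := by
  have hc' : c ∈ B.dom := interior_subset hc
  rw [D, if_pos hc, ← EReal.coe_toReal hx (hbot x), ← EReal.coe_toReal hc' (hbot c),
    ← EReal.coe_sub, ← EReal.coe_sub, EReal.toReal_coe]

theorem D_le_D_iff_toReal (hbot : ∀ z, B.f z ≠ ⊥) {x c c' : EuclideanSpace ℝ (Fin J)}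
    (hx : x ∈ B.dom) (hc : c ∈ B.U) (hc' : c' ∈ B.U) :
    B.D x c ≤ B.D x c' ↔ (B.D x c).toReal ≤ (B.D x c').toReal := by
  rw [← EReal.coe_le_coe_iff, coe_toReal_D hbot hx hc, coe_toReal_D hbot hx hc']

end BregmanSetup

theorem farthest_graph_subset_convexHull_general {J : ℕ} (B : BregmanSetup J) (hB : B.IsLegendre)
    (hDconv : ∀ x ∈ B.dom, ConvexOn ℝ B.U (fun y => (B.D x y).toReal))
    (C : Set (EuclideanSpace ℝ (Fin J))) (hCU : C ⊆ B.U)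
    (x y : EuclideanSpace ℝ (Fin J)) (hy : y ∈ B.Q C x) :
    y ∈ B.Q (convexHull ℝ C) x := by
  obtain ⟨hyC, hx, hymax⟩ := hy
  refine ⟨subset_convexHull ℝ C hyC, hx, fun c hc => ?_⟩
  obtain ⟨c', hc'C, hcc'⟩ := (hDconv x hx).exists_ge_of_mem_convexHull hCU hc
  have hcU : c ∈ B.U := convexHull_min hCU (hDconv x hx).1 hc
  have hc'y := (B.D_le_D_iff_toReal hB.proper_bot hx (hCU hc'C) (hCU hyC)).1 (hymax c' hc'C)
  exact (B.D_le_D_iff_toReal hB.proper_bot hx hcU (hCU hyC)).2 (hcc'.trans hc'y)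

/-- If `D(x,·)` is convex on `U` for every `x ∈ dom f`, then the graph of `Q_C` is
contained in the graph of `Q_(conv C)`. -/
theorem farthest_graph_subset_convexHull {J : ℕ} (B : BregmanSetup J) (hB : B.IsLegendre)
    (hDconv : ∀ x ∈ B.dom, ConvexOn ℝ B.U (fun y => (B.D x y).toReal))
    (C : Set (EuclideanSpace ℝ (Fin J))) (hCne : C.Nonempty) (hCU : C ⊆ B.U)
    (x y : EuclideanSpace ℝ (Fin J)) (hy : y ∈ B.Q C x) :
    y ∈ B.Q (convexHull ℝ C) x :=
  farthest_graph_subset_convexHull_general B hB hDconv C hCU x y hy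
end
end

section
/- Let f be Legendre on ℝ^J with Bregman distance D such that D(x,·) is strictly convex on U for every x ∈ dom f, and let C ⊆ U be nonempty. Then the graphs of the farthest-point maps Q_C and Q_{conv C} coincide. -/
/-! A maximizer of a strictly convex function over a convex set is an extreme point of it, and the
extreme points of `conv C` lie in `C`; conversely, by the maximum principle for convex functions,
the maximum over `conv C` is already attained on `C`. On `dom f × U` the Bregman distance is finite,
so these facts apply to the real function `D(x,·)`. -/

open Set Filter Topology Bornology

noncomputable section

section MaximumPrinciple

variable {𝕜 E β : Type*} [Field 𝕜] [LinearOrder 𝕜] [IsStrictOrderedRing 𝕜] [AddCommGroup E]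
  [Module 𝕜 E] [AddCommGroup β] [LinearOrder β] [IsOrderedAddMonoid β] [Module 𝕜 β]
  [IsStrictOrderedModule 𝕜 β] {s t : Set E} {f : E → β} {c : E}

theorem ConvexOn.isMaxOn_convexHull (hf : ConvexOn 𝕜 s f) (hts : t ⊆ s) (hc : IsMaxOn f t c) :
    IsMaxOn f (convexHull 𝕜 t) c := fun _ hy ↦
  let ⟨_, hz, hyz⟩ := hf.exists_ge_of_mem_convexHull hts hy
  hyz.trans (hc hz)

theorem StrictConvexOn.mem_extremePoints_of_isMaxOn (hf : StrictConvexOn 𝕜 s f) (hts : t ⊆ s)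
    (hc : c ∈ t) (hmax : IsMaxOn f t c) : c ∈ t.extremePoints 𝕜 := by
  refine mem_extremePoints_iff_left.2 ⟨hc, fun x₁ h₁ x₂ h₂ hseg ↦ ?_⟩
  by_contra hne
  have hx₁₂ : x₁ ≠ x₂ := by
    rintro rfl
    exact hne (openSegment_same 𝕜 x₁ ▸ hseg).symm
  exact (hf.lt_on_openSegment (hts h₁) (hts h₂) hx₁₂ hseg).not_ge (max_le (hmax h₁) (hmax h₂))

theorem StrictConvexOn.mem_convexHull_and_isMaxOn_iff (hf : StrictConvexOn 𝕜 s f) (hts : t ⊆ s) :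
    c ∈ convexHull 𝕜 t ∧ IsMaxOn f (convexHull 𝕜 t) c ↔ c ∈ t ∧ IsMaxOn f t c := by
  constructor
  · rintro ⟨hc, hmax⟩
    have hext := hf.mem_extremePoints_of_isMaxOn (convexHull_min hts hf.1) hc hmax
    exact ⟨extremePoints_convexHull_subset hext, hmax.on_subset (subset_convexHull 𝕜 t)⟩
  · rintro ⟨hc, hmax⟩
    exact ⟨subset_convexHull 𝕜 t hc, hf.convexOn.isMaxOn_convexHull hts hmax⟩

end MaximumPrinciple

namespace BregmanSetup

variable {J : ℕ} {B : BregmanSetup J} {x y c : EuclideanSpace ℝ (Fin J)}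
  {s : Set (EuclideanSpace ℝ (Fin J))}

theorem IsLegendre.coe_toReal_D (hB : B.IsLegendre) (hx : x ∈ B.dom) (hy : y ∈ B.U) :
    ((B.D x y).toReal : EReal) = B.D x y := by
  obtain ⟨a, ha⟩ : ∃ a : ℝ, B.f x = a :=
    ⟨(B.f x).toReal, (EReal.coe_toReal hx (hB.proper_bot x)).symm⟩
  obtain ⟨b, hb⟩ : ∃ b : ℝ, B.f y = b :=
    ⟨(B.f y).toReal, (EReal.coe_toReal (interior_subset hy) (hB.proper_bot y)).symm⟩
  simp only [D, if_pos hy, ha, hb, ← EReal.coe_sub, EReal.toReal_coe]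

theorem IsLegendre.mem_Q_iff (hB : B.IsLegendre) (hx : x ∈ B.dom) (hs : s ⊆ B.U) :
    c ∈ B.Q s x ↔ c ∈ s ∧ IsMaxOn (fun y ↦ (B.D x y).toReal) s c := by
  simp only [Q, mem_ofPred_eq, hx, true_and, isMaxOn_iff]
  refine and_congr_right fun hc ↦ forall₂_congr fun y hy ↦ ?_
  rw [← EReal.coe_le_coe_iff, hB.coe_toReal_D hx (hs hy), hB.coe_toReal_D hx (hs hc)]

end BregmanSetup

theorem farthest_graph_eq_convexHull_general {J : ℕ} (B : BregmanSetup J) (hB : B.IsLegendre)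
    (hDstrict : ∀ x ∈ B.dom, StrictConvexOn ℝ B.U (fun y => (B.D x y).toReal))
    (C : Set (EuclideanSpace ℝ (Fin J))) (hCU : C ⊆ B.U) :
    ∀ x : EuclideanSpace ℝ (Fin J), B.Q C x = B.Q (convexHull ℝ C) x := by
  intro x
  ext c
  by_cases hx : x ∈ B.dom
  · have hD := hDstrict x hx
    rw [hB.mem_Q_iff hx hCU, hB.mem_Q_iff hx (convexHull_min hCU hD.1),
      hD.mem_convexHull_and_isMaxOn_iff hCU]
  · simp [BregmanSetup.Q, hx]

/-- If `D(x,·)` is strictly convex on `U` for every `x ∈ dom f`, then the graphs of the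
farthest-point maps `Q_C` and `Q_(conv C)` coincide. -/
theorem farthest_graph_eq_convexHull {J : ℕ} (B : BregmanSetup J) (hB : B.IsLegendre)
    (hDstrict : ∀ x ∈ B.dom, StrictConvexOn ℝ B.U (fun y => (B.D x y).toReal))
    (C : Set (EuclideanSpace ℝ (Fin J))) (hCne : C.Nonempty) (hCU : C ⊆ B.U) :
    ∀ x : EuclideanSpace ℝ (Fin J), B.Q C x = B.Q (convexHull ℝ C) x :=
  farthest_graph_eq_convexHull_general B hB hDstrict C hCU
end
end

section
/- Let f be Legendre on ℝ^J with Bregman distance D, and let C ⊆ int dom f be nonempty and compact. If for every x ∈ int dom f the farthest-point set argmax_{c ∈ C} D(x,c) is a singleton (C is a D-Klee set), then C is a singleton. -/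
open Set Filter Topology Bornology

noncomputable section

/-!
The farthest-distance function `F x = ⨆ c ∈ C, D(x, c)` is lower semicontinuous and dominates
`D(·, c₀)`, which grows at least linearly by strict convexity; so `F` attains its minimum at some
`x̄ ∈ dom f`. If `q` is a farthest point of `y ∈ int dom f`, then `F x̄ ≤ F y` reads
`⟪∇f q, y - x̄⟫ ≤ f y - f x̄`. For `y` on the segment from `x̄` to a point of `C` this bounds the
slope of `f` from below, which steepness forbids at a boundary point: `x̄ ∈ int dom f`. Near `x̄`
the farthest point `q y` is a unique maximizer over a compact set, hence continuous in `y`, and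
the same inequality combined with the gradient inequality at `y` gives
`⟪∇f (q y) - ∇f y, y - x̄⟫ ≤ 0`; letting `y → x̄` yields `∇f (q x̄) = ∇f x̄`. By strict convexity
`x̄ = q x̄ ∈ C`, so `D(x̄, c) ≤ D(x̄, x̄) = 0` on `C`, and `C = {x̄}`.
-/

open scoped RealInnerProductSpace
open Metric

theorem MapClusterPt.le_of_continuousAt {X Y : Type*} [TopologicalSpace X] [TopologicalSpace Y]
    {l : Filter X} {x : X} {a : Y} {q : X → Y} {φ : X → Y → ℝ} {b : ℝ}
    (ha : MapClusterPt a l q) (hl : l ≤ 𝓝 x) (hφ : ContinuousAt (Function.uncurry φ) (x, a))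
    (hb : ∀ᶠ y in l, φ y (q y) ≤ b) : φ x a ≤ b := by
  by_contra! hlt
  have hnear : ∀ᶠ p in 𝓝 x ×ˢ 𝓝 a, b < Function.uncurry φ p := by
    rw [← nhds_prod_eq]; exact hφ.eventually (lt_mem_nhds hlt)
  obtain ⟨P, hP, Q, hQ, hPQ⟩ := eventually_prod_iff.1 hnear
  obtain ⟨y, hQy, hPy, hy⟩ :=
    ((mapClusterPt_iff_frequently.1 ha _ hQ).and_eventually ((hP.filter_mono hl).and hb)).exists
  exact (hPQ hPy hQy).not_ge hy

theorem IsCompact.tendsto_nhds_of_unique_isMaxOn {X Y : Type*} [TopologicalSpace X]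
    [TopologicalSpace Y] {K : Set Y} (hK : IsCompact K) {h : X → Y → ℝ} {q : X → Y} {x₀ : X}
    {c₀ : Y} (hq : ∀ᶠ x in 𝓝 x₀, q x ∈ K ∧ IsMaxOn (h x) K (q x))
    (hh : ∀ c ∈ K, ContinuousAt (Function.uncurry h) (x₀, c))
    (huniq : ∀ c ∈ K, IsMaxOn (h x₀) K c → c = c₀) : Tendsto q (𝓝 x₀) (𝓝 c₀) := by
  refine hK.tendsto_nhds_of_unique_mapClusterPt (hq.mono fun x hx => hx.1)
    fun a ha hcl => huniq a ha fun c hc => ?_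
  have hcont : ContinuousAt (Function.uncurry fun y w => h y c - h y w) (x₀, a) := by
    have hc' : ContinuousAt (fun p : X × Y => h p.1 c) (x₀, a) :=
      ContinuousAt.comp (g := Function.uncurry h) (f := fun p : X × Y => (p.1, c)) (hh c hc)
        (by fun_prop)
    exact hc'.sub (hh a ha)
  exact sub_nonpos.1 <|
    hcl.le_of_continuousAt le_rfl hcont (hq.mono fun x hx => sub_nonpos.2 (hx.2 hc))

section InnerProductSpace

variable {E : Type*} [NormedAddCommGroup E] [InnerProductSpace ℝ E]

theorem eq_zero_of_eventually_inner_sub_nonpos {w : E → E} {x₀ : E} (hw : ContinuousAt w x₀)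
    (h : ∀ᶠ x in 𝓝 x₀, ⟪w x, x - x₀⟫ ≤ 0) : w x₀ = 0 := by
  set v := w x₀
  have hline : Tendsto (fun t : ℝ => x₀ + t • v) (𝓝[>] 0) (𝓝 x₀) := by
    have : Continuous (fun t : ℝ => x₀ + t • v) := by fun_prop
    simpa using (this.tendsto 0).mono_left nhdsWithin_le_nhds
  have hlim : Tendsto (fun t : ℝ => ⟪w (x₀ + t • v), v⟫) (𝓝[>] 0) (𝓝 ⟪v, v⟫) :=
    (hw.tendsto.comp hline).inner tendsto_const_nhds
  have hneg : ∀ᶠ t in 𝓝[>] (0 : ℝ), ⟪w (x₀ + t • v), v⟫ ≤ 0 := by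
    filter_upwards [hline.eventually h, self_mem_nhdsWithin] with t ht htpos
    rw [add_sub_cancel_left, real_inner_smul_right] at ht
    exact nonpos_of_mul_nonpos_right ht htpos
  exact real_inner_self_nonpos.1 (le_of_tendsto hlim hneg)

variable {f : E → ℝ} {grad : E → E} {s : Set E} {x y c : E}

theorem ConvexOn.add_mul_div_le_of_sphere {r δ : ℝ} (hf : ConvexOn ℝ s f) (hc : c ∈ s)
    (hr : 0 < r) (hδ : ∀ z ∈ s, ‖z - c‖ = r → f c + δ ≤ f z) (hx : x ∈ s) (hrx : r ≤ ‖x - c‖) :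
    f c + δ * (‖x - c‖ / r) ≤ f x := by
  have hxc : 0 < ‖x - c‖ := hr.trans_le hrx
  obtain ⟨t, ht, ht1, hnorm⟩ : ∃ t : ℝ, 0 < t ∧ t ≤ 1 ∧ t * ‖x - c‖ = r :=
    ⟨r / ‖x - c‖, div_pos hr hxc, (div_le_one hxc).2 hrx, div_mul_cancel₀ _ hxc.ne'⟩
  have hz : (1 - t) • c + t • x = c + t • (x - c) := by module
  have hδz := hδ _ (hz ▸ hf.1 hc hx (by linarith) ht.le (by ring))
    (by rw [add_sub_cancel_left, norm_smul, Real.norm_of_nonneg ht.le, hnorm])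
  have hconv := hf.2 hc hx (sub_nonneg.2 ht1) ht.le (sub_add_cancel 1 t)
  rw [hz, smul_eq_mul, smul_eq_mul] at hconv
  have hratio : ‖x - c‖ / r = t⁻¹ := by rw [← hnorm]; field_simp
  rw [hratio, ← div_eq_mul_inv, ← le_sub_iff_add_le', div_le_iff₀ ht]
  linarith

section Gradient

variable [CompleteSpace E] {f' : E}

theorem ConvexOn.add_inner_le_of_hasGradientAt_s13 (hf : ConvexOn ℝ s f) (hx : x ∈ s) (hy : y ∈ s)
    (hf' : HasGradientAt f f' y) : f y + ⟪f', x - y⟫ ≤ f x := by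
  have hline := hf.comp_affineMap (AffineMap.lineMap (k := ℝ) y x)
  have hderiv : HasDerivAt (f ∘ AffineMap.lineMap (k := ℝ) y x) ⟪f', x - y⟫ 0 := by
    have h : HasDerivAt (AffineMap.lineMap y x : ℝ → E) (x - y) 0 :=
      AffineMap.hasDerivAt_lineMap
    simpa using hf'.hasFDerivAt.comp_hasDerivAt_of_eq 0 h (by simp)
  have := hline.le_slope_of_hasDerivAt (x := 0) (y := 1) (by simpa using hy) (by simpa using hx)
    zero_lt_one hderiv
  simp [slope] at this
  linarith

theorem StrictConvexOn.add_inner_lt_of_hasGradientAt (hf : StrictConvexOn ℝ s f) (hx : x ∈ s)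
    (hy : y ∈ s) (hxy : x ≠ y) (hf' : HasGradientAt f f' y) : f y + ⟪f', x - y⟫ < f x := by
  set z : E := (1/2 : ℝ) • y + (1/2 : ℝ) • x
  have hz : z ∈ s := hf.1 hy hx (by norm_num) (by norm_num) (by norm_num)
  have hlt : f z < (1/2 : ℝ) • f y + (1/2 : ℝ) • f x :=
    hf.2 hy hx hxy.symm (by norm_num) (by norm_num) (by norm_num)
  have hle := hf.convexOn.add_inner_le_of_hasGradientAt_s13 hz hy hf'
  rw [show z - y = (1/2 : ℝ) • (x - y) by module, real_inner_smul_right] at hle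
  simp only [smul_eq_mul] at hlt
  linarith

theorem StrictConvexOn.eq_of_hasGradientAt (hf : StrictConvexOn ℝ s f) (hx : x ∈ s) (hy : y ∈ s)
    (hfx : HasGradientAt f f' x) (hfy : HasGradientAt f f' y) : x = y := by
  by_contra hxy
  have h₁ := hf.add_inner_lt_of_hasGradientAt hx hy hxy hfy
  have h₂ := hf.add_inner_lt_of_hasGradientAt hy hx (Ne.symm hxy) hfx
  rw [← neg_sub, inner_neg_right] at h₂
  linarith

theorem HasGradientAt.eq_of_eventually_add_inner_le_s13 {w : E} (hf : HasGradientAt f f' y)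
    (hw : ∀ᶠ z in 𝓝 y, f y + ⟪w, z - y⟫ ≤ f z) : w = f' := by
  have hmin : IsLocalMin (fun z => f z - ⟪w, z - y⟫) y := by
    filter_upwards [hw] with z hz
    simp only [sub_self, inner_zero_right, sub_zero]
    linarith
  have hlin : HasFDerivAt (fun z => ⟪w, z - y⟫) (innerSL ℝ w) y :=
    ((innerSL ℝ w).hasFDerivAt.comp y ((hasFDerivAt_id y).sub_const y)).congr_fderiv (by ext; simp)
  have := hmin.hasFDerivAt_eq_zero (hf.hasFDerivAt.sub hlin)
  have h := congrArg (fun L : E →L[ℝ] ℝ => L (f' - w)) this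
  simp only [sub_apply, zero_apply, innerSL_apply_apply,
    InnerProductSpace.toDual_apply_apply, ← inner_sub_left, inner_self_eq_zero, sub_eq_zero] at h
  exact h.symm

theorem ConvexOn.mul_norm_le_of_hasGradientAt {ρ M : ℝ} (hf : ConvexOn ℝ s f) (hρ : 0 ≤ ρ)
    (hball : closedBall c ρ ⊆ s) (hM : ∀ z ∈ closedBall c ρ, f z ≤ M) (hy : y ∈ s)
    (hf' : HasGradientAt f f' y) : ρ * ‖f'‖ ≤ M - f y + ⟪f', y - c⟫ := by
  set w : E := (ρ / ‖f'‖) • f'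
  have hw : ‖w‖ ≤ ρ ∧ ⟪f', w⟫ = ρ * ‖f'‖ := by
    rcases eq_or_ne f' 0 with rfl | hf'0
    · simp [w, hρ]
    · have : 0 < ‖f'‖ := norm_pos_iff.2 hf'0
      simp only [w, norm_smul, real_inner_smul_right, real_inner_self_eq_norm_sq, Real.norm_eq_abs,
        abs_div, abs_norm, abs_of_nonneg hρ]
      exact ⟨(div_mul_cancel₀ ρ this.ne').le, by field_simp⟩
  have hcw : c + w ∈ closedBall c ρ := by
    rw [mem_closedBall, dist_eq_norm, add_sub_cancel_left]; exact hw.1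
  have h := hf.add_inner_le_of_hasGradientAt_s13 (hball hcw) hy hf'
  rw [show c + w - y = w - (y - c) by abel, inner_sub_right, hw.2] at h
  linarith [hM _ hcw]

theorem ConvexOn.exists_eventually_norm_gradient_le [ProperSpace E] (hs : IsOpen s)
    (hf : ConvexOn ℝ s f) (hgrad : ∀ y ∈ s, HasGradientAt f (grad y) y) (hx : x ∈ s) :
    ∃ M, ∀ᶠ y in 𝓝 x, ‖grad y‖ ≤ M := by
  obtain ⟨ε, hε, hball⟩ := Metric.isOpen_iff.1 hs x hx
  have hK : closedBall x (ε / 2) ⊆ s := (closedBall_subset_ball (by linarith)).trans hball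
  obtain ⟨M, hM⟩ := (isCompact_closedBall x (ε / 2)).exists_bound_of_continuousOn
    fun z hz => (hgrad z (hK hz)).continuousAt.continuousWithinAt
  refine ⟨2 * M / (ε / 4), ?_⟩
  filter_upwards [ball_mem_nhds x (by positivity : 0 < ε / 4)] with y hy
  have hsub : closedBall y (ε / 4) ⊆ closedBall x (ε / 2) := closedBall_subset_closedBall'
    (by rw [mem_ball] at hy; linarith)
  have hyK : y ∈ closedBall x (ε / 2) := hsub (mem_closedBall_self (by positivity))
  have h := hf.mul_norm_le_of_hasGradientAt (by positivity) (hsub.trans hK)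
    (fun z hz => (abs_le.1 (hM z (hsub hz))).2) (hK hyK) (hgrad y (hK hyK))
  rw [sub_self, inner_zero_right, add_zero] at h
  rw [le_div_iff₀ (by positivity)]
  linarith [(abs_le.1 (hM y hyK)).1]

theorem ConvexOn.continuousOn_gradient [ProperSpace E] (hs : IsOpen s)
    (hf : ConvexOn ℝ s f) (hgrad : ∀ y ∈ s, HasGradientAt f (grad y) y) : ContinuousOn grad s := by
  intro x hx
  obtain ⟨M, hM⟩ := hf.exists_eventually_norm_gradient_le hs hgrad hx
  refine ContinuousAt.continuousWithinAt ?_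
  refine (isCompact_closedBall (0 : E) M).tendsto_nhds_of_unique_mapClusterPt
    (hM.mono fun y hy => mem_closedBall_zero_iff.2 hy) fun a _ ha => ?_
  refine (hgrad x hx).eq_of_eventually_add_inner_le_s13 ?_
  filter_upwards [hs.mem_nhds hx] with z hz
  refine ha.le_of_continuousAt (φ := fun y w => f y + ⟪w, z - y⟫) le_rfl ?_ ?_
  · exact ((hgrad x hx).continuousAt.comp continuousAt_fst).add
      (continuousAt_snd.inner (continuousAt_const.sub continuousAt_fst))
  · filter_upwards [hs.mem_nhds hx] with y hy
      using hf.add_inner_le_of_hasGradientAt_s13 hz hy (hgrad y hy)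

theorem ConvexOn.exists_bound_gradient_segment [ProperSpace E] {L : ℝ}
    (hf : ConvexOn ℝ s f) (hgrad : ∀ y ∈ interior s, HasGradientAt f (grad y) y) (hx : x ∈ s)
    (hc : c ∈ interior s) (hL : ∀ t ∈ Ioc (0 : ℝ) 1, f x - L * t ≤ f (x + t • (c - x))) :
    ∃ K, ∀ t ∈ Ioc (0 : ℝ) 1, ‖grad (x + t • (c - x))‖ ≤ K := by
  obtain ⟨ε, hε, hball⟩ := Metric.isOpen_iff.1 isOpen_interior c hc
  have hK : closedBall c (ε / 2) ⊆ interior s := (closedBall_subset_ball (by linarith)).trans hball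
  obtain ⟨M, hM⟩ := (isCompact_closedBall c (ε / 2)).bddAbove_image
    fun z hz => (hgrad z (hK hz)).continuousAt.continuousWithinAt
  refine ⟨(M - f x + L) / (ε / 2), fun t ht => ?_⟩
  set y := x + t • (c - x)
  have hy : y ∈ interior s :=
    hf.1.add_smul_sub_mem_interior' (subset_closure hx) hc ht
  have hback := hf.add_inner_le_of_hasGradientAt_s13 hx (interior_subset hy) (hgrad y hy)
  have hbound := hf.mul_norm_le_of_hasGradientAt (by positivity) (hK.trans interior_subset)
    (fun z hz => hM (mem_image_of_mem f hz)) (interior_subset hy) (hgrad y hy)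
  rw [show x - y = -t • (c - x) by simp [y], real_inner_smul_right] at hback
  rw [show y - c = -(1 - t) • (c - x) by simp [y]; module, real_inner_smul_right] at hbound
  have hslope : -L ≤ ⟪grad y, c - x⟫ := by nlinarith [hL t ht, ht.1]
  rw [le_div_iff₀ (by positivity)]
  nlinarith [hL t ht, ht.2]

theorem ConvexOn.mem_interior_of_steep [ProperSpace E] {L : ℝ}
    (hf : ConvexOn ℝ s f) (hgrad : ∀ y ∈ interior s, HasGradientAt f (grad y) y)
    (hsteep : ∀ x ∈ frontier s, ∀ u : ℕ → E, (∀ n, u n ∈ interior s) →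
      Tendsto u atTop (𝓝 x) → Tendsto (fun n => ‖grad (u n)‖) atTop atTop)
    (hx : x ∈ s) (hc : c ∈ interior s)
    (hL : ∀ t ∈ Ioc (0 : ℝ) 1, f x - L * t ≤ f (x + t • (c - x))) : x ∈ interior s := by
  by_contra hxs
  obtain ⟨K, hK⟩ := hf.exists_bound_gradient_segment hgrad hx hc hL
  have ht : ∀ n : ℕ, 1 / ((n : ℝ) + 1) ∈ Ioc (0 : ℝ) 1 := fun n =>
    ⟨by positivity, (div_le_one (by positivity)).2 (by linarith [n.cast_nonneg (α := ℝ)])⟩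
  set u : ℕ → E := fun n => x + (1 / ((n : ℝ) + 1)) • (c - x)
  have hu : Tendsto u atTop (𝓝 x) := by
    simpa [u] using (tendsto_const_nhds (x := x)).add
      ((tendsto_one_div_add_atTop_nhds_zero_nat (𝕜 := ℝ)).smul_const (c - x))
  have hblow := hsteep x ⟨subset_closure hx, hxs⟩ u
    (fun n => hf.1.add_smul_sub_mem_interior' (subset_closure hx) hc (ht n)) hu
  obtain ⟨n, hn⟩ := (hblow.eventually_gt_atTop K).exists
  exact (hK _ (ht n)).not_gt hn

end Gradient

def bregman (f : E → ℝ) (grad : E → E) (x y : E) : ℝ := f x - f y - ⟪grad y, x - y⟫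

@[simp]
theorem bregman_self : bregman f grad x x = 0 := by simp [bregman]

theorem ConvexOn.convexOn_bregman (hf : ConvexOn ℝ s f) (grad : E → E) (y : E) :
    ConvexOn ℝ s (fun x => bregman f grad x y) := by
  refine ⟨hf.1, fun a ha b hb μ ν hμ hν hμν => ?_⟩
  obtain rfl : ν = 1 - μ := by linarith
  have h := hf.2 ha hb hμ hν hμν
  have hlin : μ • a + (1 - μ) • b - y = μ • (a - y) + (1 - μ) • (b - y) := by module
  simp only [bregman, smul_eq_mul, hlin, inner_add_right, real_inner_smul_right] at h ⊢
  linarith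

theorem StrictConvexOn.bregman_pos [CompleteSpace E] (hf : StrictConvexOn ℝ s f) (hx : x ∈ s)
    (hy : y ∈ s) (hxy : x ≠ y) (hgrad : HasGradientAt f (grad y) y) : 0 < bregman f grad x y := by
  have := hf.add_inner_lt_of_hasGradientAt hx hy hxy hgrad
  rw [bregman]; linarith

theorem ContinuousAt.bregman (hfx : ContinuousAt f x) (hfy : ContinuousAt f y)
    (hg : ContinuousAt grad y) : ContinuousAt (Function.uncurry (bregman f grad)) (x, y) := by
  have hfx' : ContinuousAt (fun p : E × E => f p.1) (x, y) := hfx.comp continuousAt_fst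
  have hfy' : ContinuousAt (fun p : E × E => f p.2) (x, y) := hfy.comp continuousAt_snd
  have hgy' : ContinuousAt (fun p : E × E => grad p.2) (x, y) := hg.comp continuousAt_snd
  exact (hfx'.sub hfy').sub (hgy'.inner (continuousAt_fst.sub continuousAt_snd))

end InnerProductSpace

namespace BregmanSetup

variable {J : ℕ} {B : BregmanSetup J} {C : Set (EuclideanSpace ℝ (Fin J))}
  {x y z c q : EuclideanSpace ℝ (Fin J)}

def fReal (B : BregmanSetup J) (x : EuclideanSpace ℝ (Fin J)) : ℝ := (B.f x).toReal

theorem D_eq_top (hx : x ∉ B.dom) (hy : y ∈ B.U) : B.D x y = ⊤ := by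
  rw [D, if_pos hy, not_not.1 hx, EReal.top_sub (interior_subset hy), EReal.top_sub_coe]

theorem D_le_F (hc : c ∈ C) : B.D x c ≤ B.F C x :=
  le_iSup₂ (f := fun c _ => B.D x c) c hc

theorem F_eq_D_of_mem_Q (hc : c ∈ B.Q C x) : B.F C x = B.D x c :=
  le_antisymm (iSup₂_le hc.2.2) (D_le_F hc.1)

namespace IsLegendre

variable (hB : B.IsLegendre)
include hB

theorem coe_fReal (hx : x ∈ B.dom) : (B.fReal x : EReal) = B.f x :=
  EReal.coe_toReal hx (hB.proper_bot x)

theorem D_eq_bregman (hx : x ∈ B.dom) (hy : y ∈ B.U) :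
    B.D x y = bregman B.fReal B.grad x y := by
  rw [D, if_pos hy, ← hB.coe_fReal hx, ← hB.coe_fReal (interior_subset hy), bregman]
  push_cast
  rfl

theorem mem_Q_iff_s13 (hCU : C ⊆ B.U) (hx : x ∈ B.U) :
    c ∈ B.Q C x ↔ c ∈ C ∧ IsMaxOn (bregman B.fReal B.grad x) C c := by
  simp only [Q, mem_ofPred_eq, isMaxOn_iff, interior_subset hx, true_and]
  refine and_congr_right fun hc => forall₂_congr fun c' hc' => ?_
  rw [hB.D_eq_bregman (interior_subset hx) (hCU hc'), hB.D_eq_bregman (interior_subset hx) (hCU hc),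
    EReal.coe_le_coe_iff]

theorem lowerSemicontinuous_F (hCU : C ⊆ B.U) : LowerSemicontinuous (B.F C) := by
  refine lowerSemicontinuous_biSup fun c hc => ?_
  have hD : (fun x => B.D x c) =
      fun x => B.f x + ((-B.fReal c - ⟪B.grad c, x - c⟫ : ℝ) : EReal) := by
    funext x
    rw [D, if_pos (hCU hc), ← hB.coe_fReal (interior_subset (hCU hc))]
    simp only [sub_eq_add_neg, EReal.coe_add, EReal.coe_neg, add_assoc]
  rw [hD]
  refine hB.lsc.add' (EReal.continuous_coe_iff.2 (by fun_prop)).lowerSemicontinuous fun x =>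
    EReal.continuousAt_add (Or.inr (EReal.coe_ne_bot _)) (Or.inr (EReal.coe_ne_top _))

theorem continuousOn_grad_s13 : ContinuousOn B.grad B.U :=
  (show ConvexOn ℝ B.U B.fReal from hB.strict.convexOn).continuousOn_gradient isOpen_interior
    hB.smooth

theorem continuousAt_bregman (hx : x ∈ B.U) (hy : y ∈ B.U) :
    ContinuousAt (Function.uncurry (bregman B.fReal B.grad)) (x, y) :=
  ContinuousAt.bregman (hB.smooth x hx).continuousAt (hB.smooth y hy).continuousAt
    (hB.continuousOn_grad_s13.continuousAt (isOpen_interior.mem_nhds hy))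

theorem inner_grad_le_of_F_le (hCU : C ⊆ B.U) (hx : x ∈ B.U) (hq : q ∈ B.Q C x)
    (hz : z ∈ B.dom) (hF : B.F C z ≤ B.F C x) : ⟪B.grad q, x - z⟫ ≤ B.fReal x - B.fReal z := by
  have h := (D_le_F hq.1).trans (hF.trans (F_eq_D_of_mem_Q hq).le)
  rw [hB.D_eq_bregman hz (hCU hq.1), hB.D_eq_bregman (interior_subset hx) (hCU hq.1),
    EReal.coe_le_coe_iff, bregman, bregman] at h
  rw [← sub_add_sub_cancel x q z, inner_add_right, ← neg_sub z q, inner_neg_right]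
  linarith

theorem exists_lt_D (hc : c ∈ B.U) (m : ℝ) :
    ∃ R, ∀ x, R < ‖x - c‖ → (m : EReal) < B.D x c := by
  obtain ⟨ε, hε, hball⟩ := Metric.isOpen_iff.1 isOpen_interior c hc
  have hr : 0 < ε / 2 := by positivity
  have hsphere : sphere c (ε / 2) ⊆ B.U :=
    sphere_subset_closedBall.trans ((closedBall_subset_ball (by linarith)).trans hball)
  obtain ⟨δ, hδ, hδle⟩ : ∃ δ > 0, ∀ z ∈ sphere c (ε / 2), δ ≤ bregman B.fReal B.grad z c := by
    rcases (sphere c (ε / 2)).eq_empty_or_nonempty with h | h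
    · exact ⟨1, one_pos, by simp [h]⟩
    obtain ⟨z₀, hz₀, hmin⟩ := (isCompact_sphere c (ε / 2)).exists_isMinOn h fun z hz =>
      ((hB.continuousAt_bregman (hsphere hz) hc).comp
        (f := fun z => (z, c)) (by fun_prop)).continuousWithinAt
    exact ⟨_, hB.strict.bregman_pos (hsphere hz₀) hc (ne_of_mem_sphere hz₀ hr.ne')
      (hB.smooth c hc), hmin⟩
  refine ⟨max (ε / 2) (ε / 2 * m / δ), fun x hx => ?_⟩
  by_cases hxd : x ∈ B.dom
  · have hgrow := ((show ConvexOn ℝ B.dom B.fReal from hB.convexOn).convexOn_bregman B.grad c)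
      |>.add_mul_div_le_of_sphere (interior_subset hc) hr
        (fun z _ hzc => by simpa using hδle z (mem_sphere_iff_norm.2 hzc)) hxd
        ((le_max_left _ _).trans hx.le)
    rw [hB.D_eq_bregman hxd hc, EReal.coe_lt_coe_iff]
    have hx' := (le_max_right _ _).trans_lt hx
    rw [div_lt_iff₀ hδ] at hx'
    simp only [bregman_self, zero_add] at hgrow
    refine lt_of_lt_of_le ?_ hgrow
    rw [mul_div_assoc', lt_div_iff₀ hr]
    linarith
  · rw [D_eq_top hxd hc]
    exact EReal.coe_lt_top m

theorem exists_forall_F_le (hCU : C ⊆ B.U) (hC : IsCompact C) (hc : c ∈ C) :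
    ∃ x ∈ B.dom, ∀ y, B.F C x ≤ B.F C y := by
  obtain ⟨m, hm⟩ : ∃ m : ℝ, B.F C c ≤ m := by
    obtain ⟨m, hm⟩ := hC.bddAbove_image (f := bregman B.fReal B.grad c) fun c' hc' =>
      ((hB.continuousAt_bregman (hCU hc) (hCU hc')).comp
        (f := fun c' => (c, c')) (by fun_prop)).continuousWithinAt
    refine ⟨m, iSup₂_le fun c' hc' => ?_⟩
    rw [hB.D_eq_bregman (interior_subset (hCU hc)) (hCU hc'), EReal.coe_le_coe_iff]
    exact hm (mem_image_of_mem _ hc')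
  obtain ⟨R, hR⟩ := hB.exists_lt_D (hCU hc) m
  obtain ⟨x, -, hxmin⟩ := LowerSemicontinuousOn.exists_isMinOn
    ⟨c, mem_closedBall_self (le_max_right _ _)⟩ (isCompact_closedBall c (max R 0))
    ((hB.lowerSemicontinuous_F hCU).lowerSemicontinuousOn _)
  have hmin : ∀ y, B.F C x ≤ B.F C y := by
    intro y
    by_cases hy : y ∈ closedBall c (max R 0)
    · exact hxmin hy
    · rw [mem_closedBall, dist_eq_norm, not_le] at hy
      calc B.F C x ≤ B.F C c := hxmin (mem_closedBall_self (le_max_right _ _))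
        _ ≤ m := hm
        _ ≤ B.D y c := (hR y ((le_max_left _ _).trans_lt hy)).le
        _ ≤ B.F C y := D_le_F hc
  refine ⟨x, fun hx => ?_, hmin⟩
  have hxc := (D_le_F hc).trans ((hmin c).trans hm)
  rw [D_eq_top (not_not.2 hx) (hCU hc), top_le_iff] at hxc
  exact EReal.coe_ne_top m hxc

theorem mem_U_of_forall_F_le (hCU : C ⊆ B.U) (hC : IsCompact C) (hc : c ∈ C)
    (hQ : ∀ y ∈ B.U, ∃ q, q ∈ B.Q C y) (hx : x ∈ B.dom) (hmin : ∀ y, B.F C x ≤ B.F C y) :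
    x ∈ B.U := by
  obtain ⟨A, hA⟩ := hC.exists_bound_of_continuousOn (hB.continuousOn_grad_s13.mono hCU)
  refine (show ConvexOn ℝ B.dom B.fReal from hB.convexOn).mem_interior_of_steep
    (L := A * ‖c - x‖) hB.smooth hB.steep hx (hCU hc) fun t ht => ?_
  have hy : x + t • (c - x) ∈ B.U :=
    hB.convex_dom.add_smul_sub_mem_interior' (subset_closure hx) (hCU hc) ht
  obtain ⟨q, hq⟩ := hQ _ hy
  have h := hB.inner_grad_le_of_F_le hCU hy hq hx (hmin _)
  rw [add_sub_cancel_left, real_inner_smul_right] at h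
  have hCS : -(A * ‖c - x‖) ≤ ⟪B.grad q, c - x⟫ := by
    refine (neg_le_neg ?_).trans (neg_le_of_abs_le (abs_real_inner_le_norm _ _))
    exact mul_le_mul_of_nonneg_right (hA q hq.1) (norm_nonneg _)
  nlinarith [ht.1]

theorem grad_eq_of_forall_F_le (hCU : C ⊆ B.U) (hC : IsCompact C)
    {q : EuclideanSpace ℝ (Fin J) → EuclideanSpace ℝ (Fin J)} (hq : ∀ y ∈ B.U, q y ∈ B.Q C y)
    (huniq : ∀ c ∈ B.Q C x, c = q x) (hx : x ∈ B.U) (hmin : ∀ y, B.F C x ≤ B.F C y) :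
    B.grad (q x) = B.grad x := by
  have hU : ∀ᶠ y in 𝓝 x, y ∈ B.U := isOpen_interior.mem_nhds hx
  have hqx : ContinuousAt q x := by
    refine hC.tendsto_nhds_of_unique_isMaxOn (h := bregman B.fReal B.grad) ?_
      (fun c hc => hB.continuousAt_bregman hx (hCU hc))
      fun c hc hmax => huniq c ((hB.mem_Q_iff_s13 hCU hx).2 ⟨hc, hmax⟩)
    filter_upwards [hU] with y hy using (hB.mem_Q_iff_s13 hCU hy).1 (hq y hy)
  have hgrad_cont : ∀ y ∈ B.U, ContinuousAt B.grad y := fun y hy =>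
    hB.continuousOn_grad_s13.continuousAt (isOpen_interior.mem_nhds hy)
  have hw : ContinuousAt (fun y => B.grad (q y) - B.grad y) x :=
    ((hgrad_cont _ (hCU (hq x hx).1)).comp hqx).sub (hgrad_cont x hx)
  have hmono : ∀ᶠ y in 𝓝 x, ⟪B.grad (q y) - B.grad y, y - x⟫ ≤ 0 := by
    filter_upwards [hU] with y hy
    have h₁ := hB.inner_grad_le_of_F_le hCU hy (hq y hy) (interior_subset hx) (hmin y)
    have h₂ := (show ConvexOn ℝ B.U B.fReal from hB.strict.convexOn).add_inner_le_of_hasGradientAt_s13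
      hx hy (hB.smooth y hy)
    rw [← neg_sub, inner_neg_right] at h₂
    rw [inner_sub_left]
    linarith
  have hzero := eq_zero_of_eventually_inner_sub_nonpos hw hmono
  exact sub_eq_zero.1 hzero

theorem eq_singleton_of_mem_Q_self (hCU : C ⊆ B.U) (hx : x ∈ B.U) (hxQ : x ∈ B.Q C x) :
    C = {x} := by
  refine eq_singleton_iff_unique_mem.2 ⟨hxQ.1, fun c hc => ?_⟩
  by_contra hcx
  have hle := isMaxOn_iff.1 ((hB.mem_Q_iff_s13 hCU hx).1 hxQ).2 c hc
  rw [bregman_self] at hle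
  exact hle.not_gt (hB.strict.bregman_pos hx (hCU hc) (Ne.symm hcx) (hB.smooth c (hCU hc)))

end IsLegendre

end BregmanSetup

/-- **Every D-Klee set is a singleton** (Theorem 3.2): if `C ⊆ U` is nonempty and
compact and for every `x ∈ U` the farthest-point set `Q_C(x)` is a singleton, then
`C` is a singleton. -/
theorem klee_set_is_singleton {J : ℕ} (B : BregmanSetup J) (hB : B.IsLegendre)
    (C : Set (EuclideanSpace ℝ (Fin J))) (hCne : C.Nonempty) (hCU : C ⊆ B.U) (hCcomp : IsCompact C)
    (hKlee : ∀ x ∈ B.U, ∃! c, c ∈ B.Q C x) :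
    ∃ c, C = {c} := by
  obtain ⟨c₀, hc₀⟩ := hCne
  choose! q hq using fun x hx => (hKlee x hx).exists
  obtain ⟨x, hx, hmin⟩ := hB.exists_forall_F_le hCU hCcomp hc₀
  have hxU : x ∈ B.U :=
    hB.mem_U_of_forall_F_le hCU hCcomp hc₀ (fun y hy => ⟨q y, hq y hy⟩) hx hmin
  have hgrad : B.grad (q x) = B.grad x := hB.grad_eq_of_forall_F_le hCU hCcomp hq
    (fun c hc => (hKlee x hxU).unique hc (hq x hxU)) hxU hmin
  have hqx : q x = x := hB.strict.eq_of_hasGradientAt (hCU (hq x hxU).1) hxU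
    (hgrad ▸ hB.smooth _ (hCU (hq x hxU).1)) (hB.smooth x hxU)
  exact ⟨x, hB.eq_singleton_of_mem_Q_self hCU hxU (by simpa only [hqx] using hq x hxU)⟩
end
end

section
/- Every nonempty compact subset C of ℝ^J such that every point of ℝ^J has a unique farthest point in C (with respect to the Euclidean distance) is a singleton. -/
open Set Filter Topology Bornology

noncomputable section

/-!
Let `Q` be the farthest-point map of `C` and `r x = dist x (Q x)`. Uniqueness and compactness make
`Q` continuous, and `r` is coercive, so it has a global minimiser `x`. Moving `x` a small step
`t` towards `q = Q x` cannot decrease `r`; expanding the square gives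
`0 ≤ 2 ⟪x - Q (x + t • (q - x)), q - x⟫ + t ‖q - x‖²`, and letting `t → 0⁺` yields
`-2 ‖q - x‖² ≥ 0`. Hence `x` is its own farthest point in `C`, which forces `C = {x}`.
-/

open RealInnerProductSpace

def IsFarthestPoint {α : Type*} [PseudoMetricSpace α] (C : Set α) (x c : α) : Prop :=
  c ∈ C ∧ ∀ c' ∈ C, dist x c' ≤ dist x c

section Metric

variable {α : Type*}

theorem IsFarthestPoint.eq_singleton [MetricSpace α] {C : Set α} {x : α}
    (h : IsFarthestPoint C x x) : C = {x} :=
  eq_singleton_iff_unique_mem.mpr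
    ⟨h.1, fun c hc => (dist_le_zero.mp ((h.2 c hc).trans (dist_self x).le)).symm⟩

variable [PseudoMetricSpace α] {C : Set α} {Q : α → α}

theorem isFarthestPoint_of_mapClusterPt (hC : IsClosed C)
    (hQ : ∀ x, IsFarthestPoint C x (Q x)) {x y : α} (h : MapClusterPt y (𝓝 x) Q) :
    IsFarthestPoint C x y := by
  refine ⟨?_, fun c hc => le_of_forall_pos_lt_add fun ε hε => ?_⟩
  · exact hC.mem_of_mapClusterPt h (Eventually.of_forall fun z => (hQ z).1)
  · obtain ⟨z, hzx, hzy⟩ : ∃ z, dist z x < ε / 3 ∧ dist (Q z) y < ε / 3 :=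
      ((mapClusterPt_iff_frequently.mp h _ (Metric.ball_mem_nhds y (by positivity))).and_eventually
        (Metric.ball_mem_nhds x (by positivity))).exists.imp fun z hz => ⟨hz.2, hz.1⟩
    calc dist x c ≤ dist x z + dist z c := dist_triangle _ _ _
      _ ≤ dist x z + dist z (Q z) := by gcongr; exact (hQ z).2 c hc
      _ ≤ dist x z + (dist z x + dist x y + dist y (Q z)) := by
        gcongr; exact dist_triangle4 _ _ _ _
      _ < dist x y + ε := by rw [dist_comm x z, dist_comm y]; linarith

theorem continuous_of_unique_isFarthestPoint [T2Space α] (hC : IsCompact C)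
    (hQ : ∀ x, IsFarthestPoint C x (Q x)) (huniq : ∀ x c, IsFarthestPoint C x c → c = Q x) :
    Continuous Q :=
  continuous_iff_continuousAt.mpr fun x =>
    hC.tendsto_nhds_of_unique_mapClusterPt (Eventually.of_forall fun z => (hQ z).1)
      fun _ _ hy => huniq x _ (isFarthestPoint_of_mapClusterPt hC.isClosed hQ hy)

theorem exists_forall_dist_farthestPoint_le [ProperSpace α] [Nonempty α]
    (hQ : ∀ x, IsFarthestPoint C x (Q x)) (hQc : Continuous Q) :
    ∃ x, ∀ y, dist x (Q x) ≤ dist y (Q y) := by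
  inhabit α
  refine (continuous_id.dist hQc).exists_forall_le <|
    tendsto_atTop_mono (fun y => ?_) (tendsto_dist_left_cocompact_atTop (Q default))
  rw [dist_comm]
  exact (hQ y).2 _ (hQ default).1

end Metric

section InnerProduct

variable {E : Type*} [NormedAddCommGroup E] [InnerProductSpace ℝ E]

theorem norm_add_smul_sub_sq (x q c : E) (t : ℝ) :
    ‖x + t • (q - x) - c‖ ^ 2 = ‖x - c‖ ^ 2 + t * (2 * ⟪x - c, q - x⟫ + t * ‖q - x‖ ^ 2) := by
  rw [show x + t • (q - x) - c = (x - c) + t • (q - x) by abel, norm_add_sq_real,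
    real_inner_smul_right, norm_smul, mul_pow, Real.norm_eq_abs, sq_abs]
  ring

theorem two_inner_add_mul_norm_sq_nonneg {x q c : E} {t : ℝ} (ht : 0 < t)
    (hc : ‖x - c‖ ≤ ‖x - q‖) (hq : ‖x - q‖ ≤ ‖x + t • (q - x) - c‖) :
    0 ≤ 2 * ⟪x - c, q - x⟫ + t * ‖q - x‖ ^ 2 := by
  have hsq : ‖x - c‖ ^ 2 ≤ ‖x + t • (q - x) - c‖ ^ 2 := by gcongr; exact hc.trans hq
  rw [norm_add_smul_sub_sq] at hsq
  exact nonneg_of_mul_nonneg_right (by linarith) ht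

theorem farthestPoint_eq_self_of_forall_dist_le {C : Set E} {Q : E → E} {x : E}
    (hQ : ∀ x, IsFarthestPoint C x (Q x)) (hQc : ContinuousAt Q x)
    (hmin : ∀ y, dist x (Q x) ≤ dist y (Q y)) : Q x = x := by
  set q := Q x
  have hpath : Tendsto (fun t : ℝ => x + t • (q - x)) (𝓝 0) (𝓝 x) :=
    (continuous_const.add (continuous_id.smul continuous_const)).tendsto' _ _ (by simp)
  have hlim : Tendsto (fun t : ℝ => 2 * ⟪x - Q (x + t • (q - x)), q - x⟫ + t * ‖q - x‖ ^ 2)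
      (𝓝 0) (𝓝 (2 * ⟪x - q, q - x⟫ + 0 * ‖q - x‖ ^ 2)) :=
    (((tendsto_const_nhds.sub (hQc.tendsto.comp hpath)).inner tendsto_const_nhds).const_mul 2).add
      (tendsto_id.mul_const _)
  have hnonneg : 0 ≤ 2 * ⟪x - q, q - x⟫ + 0 * ‖q - x‖ ^ 2 := by
    refine ge_of_tendsto (hlim.mono_left (nhdsWithin_le_nhds (s := Ioi 0)))
      (eventually_nhdsWithin_of_forall fun t (ht : 0 < t) => ?_)
    refine two_inner_add_mul_norm_sq_nonneg ht ?_ ?_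
    · simpa only [← dist_eq_norm] using (hQ x).2 _ (hQ _).1
    · simpa only [← dist_eq_norm] using hmin _
  rw [← neg_sub q x, inner_neg_left, real_inner_self_eq_norm_sq] at hnonneg
  exact sub_eq_zero.mp (norm_eq_zero.mp (by nlinarith [norm_nonneg (q - x)]))

end InnerProduct

theorem euclidean_klee_set_is_singleton_general {J : ℕ} (C : Set (EuclideanSpace ℝ (Fin J)))
    (hCcomp : IsCompact C)
    (hKlee : ∀ x : EuclideanSpace ℝ (Fin J), ∃! c, c ∈ C ∧ ∀ c' ∈ C, dist x c' ≤ dist x c) :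
    ∃ c, C = {c} := by
  choose Q hQ huniq using hKlee
  have hQc : Continuous Q := continuous_of_unique_isFarthestPoint hCcomp hQ huniq
  obtain ⟨x, hmin⟩ := exists_forall_dist_farthestPoint_le hQ hQc
  have hx : Q x = x := farthestPoint_eq_self_of_forall_dist_le hQ hQc.continuousAt hmin
  have hxx : IsFarthestPoint C x (Q x) := hQ x
  rw [hx] at hxx
  exact ⟨x, hxx.eq_singleton⟩

/-- **Klee's theorem**: every nonempty compact subset `C` of `ℝ^J` such that every
point of `ℝ^J` has a unique farthest point in `C` (w.r.t. the Euclidean distance)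
is a singleton. -/
theorem euclidean_klee_set_is_singleton {J : ℕ} (C : Set (EuclideanSpace ℝ (Fin J)))
    (hCne : C.Nonempty) (hCcomp : IsCompact C)
    (hKlee : ∀ x : EuclideanSpace ℝ (Fin J), ∃! c, c ∈ C ∧ ∀ c' ∈ C, dist x c' ≤ dist x c) :
    ∃ c, C = {c} :=
  euclidean_klee_set_is_singleton_general C hCcomp hKlee
end
end

section
/- Let f be Legendre on ℝ^J with Bregman distance D, and C ⊆ U = int dom f nonempty compact. Then F_C = sup_{c∈C} D(·,c) is proper, lower semicontinuous, convex, dom F_C = dom f, the domain of the subdifferential ∂F_C equals U, and F_C is strictly convex on U. -/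
open Set Filter Topology Bornology

noncomputable section

/-- `g` is convex as an extended-real-valued function. -/
def ERealConvex {J : ℕ} (g : EuclideanSpace ℝ (Fin J) → EReal) : Prop :=
  ∀ x y : EuclideanSpace ℝ (Fin J), ∀ a b : ℝ, 0 ≤ a → 0 ≤ b → a + b = 1 →
    g (a • x + b • y) ≤ (a : EReal) * g x + (b : EReal) * g y

/-- The convex subdifferential of an extended-real-valued function. -/
def subdiff {J : ℕ} (g : EuclideanSpace ℝ (Fin J) → EReal) (x : EuclideanSpace ℝ (Fin J)) : Set (EuclideanSpace ℝ (Fin J)) :=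
  {p | g x ≠ ⊤ ∧ ∀ z, g x + ((inner ℝ p (z - x) : ℝ) : EReal) ≤ g z}

/-!
For `c ∈ C ⊆ U` the Bregman distance splits as `D(x, c) = f(x) + a_c(x)` with `a_c` affine of
slope `-∇f(c)`. On the compact set `C` the slopes and offsets of the `a_c` are bounded, so their
upper envelope `g` is a finite convex function and `F_C = f + g`; most properties of `F_C` are
then inherited from `f`. A subgradient of `g` is obtained as a limit of slopes of nearly maximal
`a_c`. For `dom ∂F_C ⊆ U`: a subgradient of `f + g` at a boundary point `x` of `dom f` bounds `∇f`
on the segment from `x` to an interior ball (gradient inequality for `f`, convexity of `g`,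
boundedness of `f` on the ball), contradicting steepness.
-/

open scoped RealInnerProductSpace

section InnerProduct

variable {E ι : Type*} [NormedAddCommGroup E] [InnerProductSpace ℝ E]

lemma ConvexOn.add_inner_le_of_hasGradientAt_s15 [CompleteSpace E] {s : Set E} {f : E → ℝ}
    (hf : ConvexOn ℝ s f) {y z p : E} (hy : y ∈ s) (hz : z ∈ s) (hp : HasGradientAt f p y) :
    f y + ⟪p, z - y⟫ ≤ f z := by
  let ℓ : ℝ →ᵃ[ℝ] E := AffineMap.lineMap y z
  have hℓ := hf.comp_affineMap ℓ
  have hderiv : HasDerivAt (f ∘ ℓ) ⟪p, z - y⟫ 0 := by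
    have hp' : HasFDerivAt f (InnerProductSpace.toDual ℝ E p) (ℓ 0) := by
      simpa [ℓ] using hp.hasFDerivAt
    simpa [ℓ] using hp'.comp_hasDerivAt (0 : ℝ) AffineMap.hasDerivAt_lineMap
  have := hℓ.le_slope_of_hasDerivAt (x := 0) (y := 1) (by simpa [ℓ] using hy)
    (by simpa [ℓ] using hz) zero_lt_one hderiv
  simp only [slope_def_field, Function.comp_apply, AffineMap.lineMap_apply_one,
    AffineMap.lineMap_apply_zero, sub_zero, div_one, ℓ] at this
  linarith

lemma norm_le_of_forall_inner_le {v : E} {r K : ℝ} (hr : 0 < r)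
    (h : ∀ u : E, ‖u‖ ≤ r → ⟪v, u⟫ ≤ K) : ‖v‖ ≤ K / r := by
  rw [le_div_iff₀ hr]
  rcases eq_or_ne v 0 with rfl | hv
  · simpa using h 0 (by simpa using hr.le)
  have hnv : 0 < ‖v‖ := norm_pos_iff.2 hv
  calc ‖v‖ * r = ⟪v, (r / ‖v‖) • v⟫ := by
        rw [real_inner_smul_right, real_inner_self_eq_norm_sq]
        field_simp
    _ ≤ K := h _ (by rw [norm_smul, Real.norm_of_nonneg (by positivity), div_mul_cancel₀ _ hnv.ne'])

def affineSup (b : ι → ℝ) (v : ι → E) (x : E) : ℝ := ⨆ i, (b i + ⟪v i, x⟫)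

variable {b : ι → ℝ} {v : ι → E} {M : ℝ}

lemma bddAbove_range_add_inner (hb : BddAbove (range b)) (hv : ∀ i, ‖v i‖ ≤ M) (x : E) :
    BddAbove (range fun i => b i + ⟪v i, x⟫) := by
  obtain ⟨β, hβ⟩ := hb
  refine ⟨β + M * ‖x‖, ?_⟩
  rintro _ ⟨i, rfl⟩
  have h1 := hβ ⟨i, rfl⟩
  have h2 := (real_inner_le_norm (v i) x).trans
    (mul_le_mul_of_nonneg_right (hv i) (norm_nonneg x))
  linarith

lemma add_inner_le_affineSup (hb : BddAbove (range b)) (hv : ∀ i, ‖v i‖ ≤ M) (i : ι)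
    (x : E) :
    b i + ⟪v i, x⟫ ≤ affineSup b v x :=
  le_ciSup (bddAbove_range_add_inner hb hv x) i

lemma convexOn_affineSup [Nonempty ι] (hb : BddAbove (range b)) (hv : ∀ i, ‖v i‖ ≤ M) :
    ConvexOn ℝ univ (affineSup b v) := by
  refine ⟨convex_univ, fun x _ y _ s t hs ht hst => ciSup_le fun i => ?_⟩
  have hx := mul_le_mul_of_nonneg_left (add_inner_le_affineSup hb hv i x) hs
  have hy := mul_le_mul_of_nonneg_left (add_inner_le_affineSup hb hv i y) ht
  have : b i = s * b i + t * b i := by rw [← add_mul, hst, one_mul]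
  simp only [smul_eq_mul, inner_add_right, real_inner_smul_right]
  linarith

lemma exists_subgradient_affineSup [ProperSpace E] [Nonempty ι] (hb : BddAbove (range b))
    (hv : ∀ i, ‖v i‖ ≤ M) (x : E) :
    ∃ q : E, ∀ z, affineSup b v x + ⟪q, z - x⟫ ≤ affineSup b v z := by
  have hlt : ∀ n : ℕ, ∃ i, affineSup b v x - 1 / (n + 1) < b i + ⟪v i, x⟫ := fun n =>
    exists_lt_of_lt_ciSup (sub_lt_self _ Nat.one_div_pos_of_nat)
  choose i hi using hlt
  obtain ⟨q, -, φ, hφ, hlim⟩ := tendsto_subseq_of_bounded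
    (Metric.isBounded_closedBall (x := 0) (r := M)) fun n => mem_closedBall_zero_iff.2 (hv (i n))
  refine ⟨q, fun z => le_of_tendsto' (x := atTop)
    (f := fun n => affineSup b v x - 1 / ((φ n : ℕ) + 1) + ⟪v (i (φ n)), z - x⟫) ?_ fun n => ?_⟩
  · have h0 := (tendsto_one_div_add_atTop_nhds_zero_nat (𝕜 := ℝ)).comp hφ.tendsto_atTop
    simpa using (tendsto_const_nhds.sub h0).add (hlim.inner tendsto_const_nhds)
  · have hz := add_inner_le_affineSup hb hv (i (φ n)) z
    have hx := hi (φ n)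
    rw [inner_sub_right]
    linarith

end InnerProduct

namespace BregmanSetup

open Metric

variable {J : ℕ} {B : BregmanSetup J} {g : EuclideanSpace ℝ (Fin J) → ℝ}

lemma add_coe_ne_top_iff {x : EuclideanSpace ℝ (Fin J)} : B.f x + g x ≠ ⊤ ↔ x ∈ B.dom :=
  EReal.add_ne_top_iff_ne_top_left (EReal.coe_ne_bot _) (EReal.coe_ne_top _)

lemma add_coe_eq_top {x : EuclideanSpace ℝ (Fin J)} (hx : x ∉ B.dom) : B.f x + g x = ⊤ :=
  not_not.1 (add_coe_ne_top_iff.not.2 hx)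

namespace IsLegendre

variable (hB : B.IsLegendre)
include hB

lemma toReal_add_inner_grad_le {y z : EuclideanSpace ℝ (Fin J)} (hy : y ∈ B.U) (hz : z ∈ B.dom) :
    (B.f y).toReal + ⟪B.grad y, z - y⟫ ≤ (B.f z).toReal :=
  hB.convexOn.add_inner_le_of_hasGradientAt_s15 (interior_subset hy) hz (hB.smooth y hy)

lemma continuousOn_toReal : ContinuousOn (fun x => (B.f x).toReal) B.U :=
  fun y hy => (hB.smooth y hy).differentiableAt.continuousAt.continuousWithinAt

lemma exists_norm_grad_le {C : Set (EuclideanSpace ℝ (Fin J))} (hC : IsCompact C)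
    (hCU : C ⊆ B.U) : ∃ M, ∀ c ∈ C, ‖B.grad c‖ ≤ M := by
  obtain ⟨r, hr, hrU⟩ := hC.exists_cthickening_subset_open isOpen_interior hCU
  obtain ⟨A, hA⟩ := hC.cthickening.exists_bound_of_continuousOn (hB.continuousOn_toReal.mono hrU)
  refine ⟨2 * A / r, fun c hc => norm_le_of_forall_inner_le hr fun u hu => ?_⟩
  have hcu : c + u ∈ cthickening r C :=
    closedBall_subset_cthickening hc r (by simpa [dist_eq_norm] using hu)
  have h := hB.toReal_add_inner_grad_le (hCU hc) (interior_subset (hrU hcu))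
  rw [add_sub_cancel_left] at h
  have h1 := (le_abs_self _).trans (hA _ hcu)
  have h2 := neg_le_of_abs_le (hA c (self_subset_cthickening C hc))
  linarith

lemma add_smul_sub_mem_U {x x₀ : EuclideanSpace ℝ (Fin J)} (hx : x ∈ B.dom) (hx₀ : x₀ ∈ B.U)
    {t : ℝ} (ht₀ : 0 < t) (ht₁ : t ≤ 1) : x + t • (x₀ - x) ∈ B.U := by
  have := hB.convex_dom.combo_interior_closure_mem_interior hx₀ (subset_closure hx) ht₀
    (sub_nonneg.2 ht₁) (add_sub_cancel t 1)
  rwa [show t • x₀ + (1 - t) • x = x + t • (x₀ - x) by module] at this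

lemma norm_grad_segment_le (hg : ConvexOn ℝ univ g)
    {x p x₀ : EuclideanSpace ℝ (Fin J)} (hx : x ∈ B.dom)
    (hp : ∀ z ∈ B.dom, (B.f x).toReal + g x + ⟪p, z - x⟫ ≤ (B.f z).toReal + g z)
    {r A : ℝ} (hr : 0 < r) (hball : closedBall x₀ r ⊆ B.U)
    (hA : ∀ z ∈ closedBall x₀ r, (B.f z).toReal ≤ A) {t : ℝ} (ht₀ : 0 < t) (ht₁ : t ≤ 1) :
    ‖B.grad (x + t • (x₀ - x))‖ ≤ (A - (B.f x).toReal - (g x - g x₀ + ⟪p, x₀ - x⟫)) / r := by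
  have hy := hB.add_smul_sub_mem_U hx (hball (mem_closedBall_self hr.le)) ht₀ ht₁
  set y := x + t • (x₀ - x)
  -- `κ` bounds `⟪∇f(y), x₀ - x⟫` from below independently of `t`; this makes the bound uniform.
  set κ := g x - g x₀ + ⟪p, x₀ - x⟫
  have hfy : (B.f x).toReal + t * κ ≤ (B.f y).toReal := by
    have hpy := hp y (interior_subset hy)
    have hgy : g y ≤ (1 - t) * g x + t * g x₀ := by
      have := hg.2 (mem_univ x) (mem_univ x₀) (sub_nonneg.2 ht₁) ht₀.le (sub_add_cancel 1 t)
      rwa [show (1 - t) • x + t • x₀ = y by simp only [y]; module] at this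
    rw [show y - x = t • (x₀ - x) by simp only [y]; abel, real_inner_smul_right] at hpy
    simp only [κ]
    linarith
  have hκ : κ ≤ ⟪B.grad y, x₀ - x⟫ := by
    have h := hB.toReal_add_inner_grad_le hy hx
    rw [show x - y = -(t • (x₀ - x)) by simp only [y]; abel, inner_neg_right,
      real_inner_smul_right] at h
    exact le_of_mul_le_mul_left (by linarith) ht₀
  refine norm_le_of_forall_inner_le hr fun u hu => ?_
  have hu' : x₀ + u ∈ closedBall x₀ r := by simpa [dist_eq_norm] using hu
  have h := hB.toReal_add_inner_grad_le hy (interior_subset (hball hu'))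
  rw [show x₀ + u - y = (1 - t) • (x₀ - x) + u by simp only [y]; module, inner_add_right,
    real_inner_smul_right] at h
  have := mul_le_mul_of_nonneg_left hκ (sub_nonneg.2 ht₁)
  linarith [hA _ hu']

lemma mem_U_of_forall_add_inner_le (hg : ConvexOn ℝ univ g)
    {x p : EuclideanSpace ℝ (Fin J)} (hx : x ∈ B.dom)
    (hp : ∀ z ∈ B.dom, (B.f x).toReal + g x + ⟪p, z - x⟫ ≤ (B.f z).toReal + g z) :
    x ∈ B.U := by
  by_contra hxU
  obtain ⟨x₀, hx₀⟩ := hB.nonempty_int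
  obtain ⟨r, hr, hball⟩ := nhds_basis_closedBall.mem_iff.1 (isOpen_interior.mem_nhds hx₀)
  obtain ⟨A, hA⟩ := (isCompact_closedBall x₀ r).exists_bound_of_continuousOn
    (hB.continuousOn_toReal.mono hball)
  have ht₁ (n : ℕ) : 1 / (n + 1 : ℝ) ≤ 1 := by
    rw [div_le_one (by positivity)]; linarith [n.cast_nonneg (α := ℝ)]
  set s : ℕ → EuclideanSpace ℝ (Fin J) := fun n => x + (1 / (n + 1 : ℝ)) • (x₀ - x)
  have hsU (n : ℕ) : s n ∈ B.U := hB.add_smul_sub_mem_U hx hx₀ Nat.one_div_pos_of_nat (ht₁ n)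
  have hs : Tendsto s atTop (𝓝 x) := by
    simpa [s] using ((tendsto_one_div_add_atTop_nhds_zero_nat (𝕜 := ℝ)).smul_const
      (x₀ - x)).const_add x
  obtain ⟨n, hn⟩ := ((hB.steep x ⟨subset_closure hx, hxU⟩ s hsU hs).eventually_gt_atTop
    ((A - (B.f x).toReal - (g x - g x₀ + ⟪p, x₀ - x⟫)) / r)).exists
  exact hn.not_ge (hB.norm_grad_segment_le hg hx hp hr hball
    (fun z hz => (le_abs_self _).trans (hA z hz)) Nat.one_div_pos_of_nat (ht₁ n))

lemma add_coe_eq_coe {x : EuclideanSpace ℝ (Fin J)} (hx : x ∈ B.dom) :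
    B.f x + g x = (((B.f x).toReal + g x : ℝ) : EReal) := by
  rw [EReal.coe_add, EReal.coe_toReal hx (hB.proper_bot x)]

lemma add_coe_ne_bot (x : EuclideanSpace ℝ (Fin J)) : B.f x + g x ≠ ⊥ :=
  EReal.add_ne_bot_iff.2 ⟨hB.proper_bot x, EReal.coe_ne_bot _⟩

lemma lowerSemicontinuous_add_coe (hg : Continuous g) :
    LowerSemicontinuous fun x => B.f x + g x :=
  hB.lsc.add' (continuous_coe_real_ereal.comp hg).lowerSemicontinuous fun _ =>
    EReal.continuousAt_add (Or.inr (EReal.coe_ne_bot _)) (Or.inr (EReal.coe_ne_top _))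

lemma erealConvex_add_coe (hg : ConvexOn ℝ univ g) : ERealConvex fun x => B.f x + g x := by
  intro x y a b ha hb hab
  rcases ha.eq_or_lt with rfl | ha
  · obtain rfl : b = 1 := by linarith
    simp
  rcases hb.eq_or_lt with rfl | hb
  · obtain rfl : a = 1 := by linarith
    simp
  have hmul {t : ℝ} (ht : 0 ≤ t) (z) : (t : EReal) * (B.f z + g z) ≠ ⊥ :=
    (EReal.mul_ne_bot _ _).2 ⟨.inl (EReal.coe_ne_bot _), .inr (hB.add_coe_ne_bot z),
      .inl (EReal.coe_ne_top _), .inl (EReal.coe_nonneg.2 ht)⟩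
  dsimp only
  by_cases hx : x ∈ B.dom
  · by_cases hy : y ∈ B.dom
    · rw [hB.add_coe_eq_coe hx, hB.add_coe_eq_coe hy,
        hB.add_coe_eq_coe (hB.convex_dom hx hy ha.le hb.le hab), ← EReal.coe_mul,
        ← EReal.coe_mul, ← EReal.coe_add, EReal.coe_le_coe_iff]
      have hf := hB.convexOn.2 hx hy ha.le hb.le hab
      have hg := hg.2 (mem_univ x) (mem_univ y) ha.le hb.le hab
      simp only [smul_eq_mul] at hf hg
      linarith
    · rw [add_coe_eq_top hy, EReal.coe_mul_top_of_pos hb, EReal.add_top_of_ne_bot (hmul ha.le x)]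
      exact le_top
  · rw [add_coe_eq_top hx, EReal.coe_mul_top_of_pos ha, EReal.top_add_of_ne_bot (hmul hb.le y)]
    exact le_top

lemma mem_U_of_subdiff_add_coe_nonempty (hg : ConvexOn ℝ univ g) {x : EuclideanSpace ℝ (Fin J)}
    (h : (subdiff (fun x => B.f x + g x) x).Nonempty) : x ∈ B.U := by
  obtain ⟨p, hx, hp⟩ := h
  replace hx := add_coe_ne_top_iff.1 hx
  refine hB.mem_U_of_forall_add_inner_le hg hx (p := p) fun z hz => ?_
  have := hp z
  dsimp only at this
  rwa [hB.add_coe_eq_coe hx, hB.add_coe_eq_coe hz, ← EReal.coe_add, EReal.coe_le_coe_iff] at this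

lemma grad_add_mem_subdiff_add_coe {x q : EuclideanSpace ℝ (Fin J)} (hx : x ∈ B.U)
    (hq : ∀ z, g x + ⟪q, z - x⟫ ≤ g z) :
    B.grad x + q ∈ subdiff (fun x => B.f x + g x) x := by
  refine ⟨add_coe_ne_top_iff.2 (interior_subset hx), fun z => ?_⟩
  dsimp only
  by_cases hz : z ∈ B.dom
  · rw [hB.add_coe_eq_coe (interior_subset hx), hB.add_coe_eq_coe hz, ← EReal.coe_add,
      EReal.coe_le_coe_iff, inner_add_left]
    linarith [hB.toReal_add_inner_grad_le hx hz, hq z]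
  · rw [add_coe_eq_top hz]
    exact le_top

lemma strictConvexOn_toReal_add_coe (hg : ConvexOn ℝ univ g) :
    StrictConvexOn ℝ B.U fun x => (B.f x + g x).toReal :=
  (hB.strict.add_convexOn (hg.subset (subset_univ _) hB.strict.1)).congr fun x hx => by
    rw [hB.add_coe_eq_coe (interior_subset hx), EReal.toReal_coe, Pi.add_apply]

end IsLegendre

variable (B) in
/-- The paper's `g`: for `c ∈ U`, `D(x, c) = f(x) + (⟪∇f(c), c - x⟫ - f(c))`, so `F_C = f + g`. -/
def affineEnvelope (C : Set (EuclideanSpace ℝ (Fin J))) : EuclideanSpace ℝ (Fin J) → ℝ :=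
  affineSup (fun c : C => ⟪B.grad c, c⟫ - (B.f c).toReal) (fun c => -B.grad c)

variable {C : Set (EuclideanSpace ℝ (Fin J))}

namespace IsLegendre

variable (hB : B.IsLegendre)
include hB

lemma D_eq_add_coe {x c : EuclideanSpace ℝ (Fin J)} (hc : c ∈ B.U) :
    B.D x c = B.f x + ((⟪B.grad c, c⟫ - (B.f c).toReal + ⟪-B.grad c, x⟫ : ℝ) : EReal) := by
  rw [D, if_pos hc, ← EReal.coe_toReal (interior_subset hc) (hB.proper_bot c), sub_eq_add_neg,
    sub_eq_add_neg, add_assoc, ← EReal.coe_neg, ← EReal.coe_neg, ← EReal.coe_add]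
  congr 2
  rw [inner_neg_left, inner_sub_right, EReal.toReal_coe]
  ring

variable (hC : IsCompact C) (hCU : C ⊆ B.U)
include hC hCU

lemma exists_norm_neg_grad_le : ∃ M, ∀ c : C, ‖-B.grad c‖ ≤ M := by
  obtain ⟨M, hM⟩ := hB.exists_norm_grad_le hC hCU
  exact ⟨M, fun c => (norm_neg _).trans_le (hM c c.2)⟩

lemma bddAbove_range_inner_grad_sub :
    BddAbove (range fun c : C => ⟪B.grad c, c⟫ - (B.f c).toReal) := by
  obtain ⟨M, hM⟩ := hB.exists_norm_grad_le hC hCU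
  obtain ⟨R, hR⟩ := hC.isBounded.exists_norm_le
  obtain ⟨A, hA⟩ := hC.exists_bound_of_continuousOn (hB.continuousOn_toReal.mono hCU)
  refine ⟨M * R + A, ?_⟩
  rintro _ ⟨⟨c, hc⟩, rfl⟩
  have h1 := (real_inner_le_norm _ _).trans
    (mul_le_mul (hM c hc) (hR c hc) (norm_nonneg _) ((norm_nonneg _).trans (hM c hc)))
  linarith [neg_le_of_abs_le (hA c hc)]

lemma F_eq_add_coe_affineEnvelope (hCne : C.Nonempty) :
    B.F C = fun x => B.f x + B.affineEnvelope C x := by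
  have := hCne.to_subtype
  obtain ⟨M, hM⟩ := hB.exists_norm_neg_grad_le hC hCU
  ext x
  have hcont : ContinuousAt (fun t : ℝ => B.f x + t) (B.affineEnvelope C x) :=
    (EReal.continuousAt_add (Or.inr (EReal.coe_ne_bot _)) (Or.inr (EReal.coe_ne_top _))).comp
      (continuousAt_const.prodMk continuous_coe_real_ereal.continuousAt)
  rw [affineEnvelope, affineSup, Monotone.map_ciSup_of_continuousAt hcont
    (fun s t hst => add_le_add_right (EReal.coe_le_coe_iff.2 hst) _)
    (bddAbove_range_add_inner (hB.bddAbove_range_inner_grad_sub hC hCU) hM x), F,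
    ← iSup_subtype'']
  exact iSup_congr fun c => hB.D_eq_add_coe (hCU c.2)

lemma convexOn_affineEnvelope (hCne : C.Nonempty) : ConvexOn ℝ univ (B.affineEnvelope C) := by
  have := hCne.to_subtype
  obtain ⟨M, hM⟩ := hB.exists_norm_neg_grad_le hC hCU
  exact convexOn_affineSup (hB.bddAbove_range_inner_grad_sub hC hCU) hM

lemma exists_subgradient_affineEnvelope (hCne : C.Nonempty) (x : EuclideanSpace ℝ (Fin J)) :
    ∃ q, ∀ z, B.affineEnvelope C x + ⟪q, z - x⟫ ≤ B.affineEnvelope C z := by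
  have := hCne.to_subtype
  obtain ⟨M, hM⟩ := hB.exists_norm_neg_grad_le hC hCU
  exact exists_subgradient_affineSup (hB.bddAbove_range_inner_grad_sub hC hCU) hM x

end IsLegendre

end BregmanSetup

/-- (Proposition 4.1) For `C ⊆ U` nonempty compact, `F_C` is proper, lower
semicontinuous and convex, `dom F_C = dom f`, `dom ∂F_C = U`, and `F_C` is
strictly convex on `U`. -/
theorem farthest_distance_properties {J : ℕ} (B : BregmanSetup J) (hB : B.IsLegendre)
    (C : Set (EuclideanSpace ℝ (Fin J))) (hCne : C.Nonempty) (hCU : C ⊆ B.U) (hCcomp : IsCompact C) :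
    (∃ x, B.F C x ≠ ⊤) ∧ (∀ x, B.F C x ≠ ⊥) ∧
    LowerSemicontinuous (B.F C) ∧ ERealConvex (B.F C) ∧
    {x : EuclideanSpace ℝ (Fin J) | B.F C x ≠ ⊤} = B.dom ∧
    {x : EuclideanSpace ℝ (Fin J) | (subdiff (B.F C) x).Nonempty} = B.U ∧
    StrictConvexOn ℝ B.U (fun x => (B.F C x).toReal) := by
  have hg := hB.convexOn_affineEnvelope hCcomp hCU hCne
  rw [hB.F_eq_add_coe_affineEnvelope hCcomp hCU hCne]
  obtain ⟨c, hc⟩ := hCne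
  refine ⟨⟨c, BregmanSetup.add_coe_ne_top_iff.2 (interior_subset (hCU hc))⟩, hB.add_coe_ne_bot,
    hB.lowerSemicontinuous_add_coe hg.locallyLipschitz.continuous, hB.erealConvex_add_coe hg,
    Set.ext fun _ => BregmanSetup.add_coe_ne_top_iff,
    Set.ext fun x => ⟨hB.mem_U_of_subdiff_add_coe_nonempty hg, fun hx => ?_⟩,
    hB.strictConvexOn_toReal_add_coe hg⟩
  obtain ⟨q, hq⟩ := hB.exists_subgradient_affineEnvelope hCcomp hCU ⟨c, hc⟩ x
  exact ⟨_, hB.grad_add_mem_subdiff_add_coe hx hq⟩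
end
end
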